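/- arXiv:1811.06144 — 3 statements merged into one kernel-verified Lean document; each statement's English description precedes it below -/
import Mathlib

section
/- Fix U > 0 and suppose Z : (0,∞) → (0,1) satisfies Y·Z(Y) = constant (i.e., Z(Y) = K/Y for a constant K > 0 determined by the SOP constraint). Then the function Ω(Y) = log₂((1+Y)/(1+Y Z(Y))) · exp(−U Y) = log₂((1+Y)/(1+K)) · exp(−U Y) has a unique stationary point Y* on (K, ∞) satisfying 1/((1+Y)ln 2) = U·log₂((1+Y)/(1+K)), and the second derivative of Ω at Y* equals −exp(−U Y*)·(U(1+Y*)+1)/((1+Y*)² ln 2) < 0; hence Ω is maximized at Y*. -/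
/-!
Once `Y·Z(Y) = K` is substituted, `Ω(Y) = log₂((1+Y)/(1+K))·e^{-UY}` and
`Ω'(Y) = e^{-UY} φ(Y) / ln 2` with `φ(Y) = 1/(1+Y) − U·ln((1+Y)/(1+K))`.
The factor `φ` is strictly decreasing, positive at `K` and tends to `−∞`, so it has exactly one
zero `Y*` on `(K, ∞)`; `Ω` increases before `Y*` and decreases after it, hence attains its maximum
there. At a zero of `φ` the product rule leaves only `Ω''(Y*) = e^{-UY*} φ'(Y*) / ln 2`.
-/

open Real Set Filter Topology

/-- `Ω` with `Y·Z(Y) = K` substituted. -/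
noncomputable def throughput (U K Y : ℝ) : ℝ :=
  logb 2 ((1 + Y) / (1 + K)) * exp (-U * Y)

noncomputable def stationarityGap (U K Y : ℝ) : ℝ :=
  (1 + Y)⁻¹ - U * log ((1 + Y) / (1 + K))

theorem HasDerivAt.mul_of_eq_zero {𝕜 : Type*} [NontriviallyNormedField 𝕜] {f g : 𝕜 → 𝕜}
    {f' g' x : 𝕜} (hf : HasDerivAt f f' x) (hg : HasDerivAt g g' x) (hgx : g x = 0) :
    HasDerivAt (fun y => f y * g y) (f x * g') x :=
  (hf.fun_mul hg).congr_deriv (by simp [hgx])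

section

variable {U K Y : ℝ}

theorem hasDerivAt_log_one_add_div (hK : -1 < K) (hY : -1 < Y) :
    HasDerivAt (fun Y => log ((1 + Y) / (1 + K))) (1 + Y)⁻¹ Y := by
  have h := (((hasDerivAt_id' Y).const_add 1).div_const (1 + K)).log
    (div_pos (by linarith) (by linarith)).ne'
  refine h.congr_deriv ?_
  field_simp [show 1 + K ≠ 0 by linarith, show 1 + Y ≠ 0 by linarith]

theorem hasDerivAt_throughput (hK : -1 < K) (hY : -1 < Y) :
    HasDerivAt (throughput U K) (exp (-U * Y) * stationarityGap U K Y / log 2) Y := by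
  have hexp : HasDerivAt (fun Y => exp (-U * Y)) (exp (-U * Y) * -U) Y := by
    simpa using ((hasDerivAt_id Y).const_mul (-U)).exp
  refine (((hasDerivAt_log_one_add_div hK hY).div_const (log 2)).mul hexp).congr_deriv ?_
  simp only [stationarityGap]
  ring

theorem hasDerivAt_stationarityGap (hK : -1 < K) (hY : -1 < Y) :
    HasDerivAt (stationarityGap U K) (-((1 + Y) ^ 2)⁻¹ - U * (1 + Y)⁻¹) Y :=
  (((hasDerivAt_id' Y).const_add 1).inv (by linarith) |>.congr_deriv (by ring)).sub
    ((hasDerivAt_log_one_add_div hK hY).const_mul U)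

theorem stationarityGap_strictAntiOn (hU : 0 < U) (hK : -1 < K) :
    StrictAntiOn (stationarityGap U K) (Ioi (-1)) := by
  intro a ha b hb hab
  simp only [mem_Ioi] at ha hb
  have hinv : (1 + b)⁻¹ < (1 + a)⁻¹ := inv_strictAnti₀ (by linarith) (by linarith)
  have hlog : log ((1 + a) / (1 + K)) < log ((1 + b) / (1 + K)) :=
    log_lt_log (div_pos (by linarith) (by linarith))
      (div_lt_div_of_pos_right (by linarith) (by linarith))
  simp only [stationarityGap]
  nlinarith

theorem one_div_mul_log_two_eq_iff :
    1 / ((1 + Y) * log 2) = U * logb 2 ((1 + Y) / (1 + K)) ↔ stationarityGap U K Y = 0 := by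
  have hlog2 : log 2 ≠ 0 := (log_pos one_lt_two).ne'
  rw [stationarityGap, sub_eq_zero, logb, one_div, mul_inv, ← div_eq_mul_inv, mul_div_assoc',
    div_left_inj' hlog2]

theorem exists_stationarityGap_eq_zero (hU : 0 < U) (hK : -1 < K) :
    ∃ Y ∈ Ioi K, stationarityGap U K Y = 0 := by
  -- `B` is chosen so that `U·ln((1+B)/(1+K)) = 2/(1+K)`, which exceeds `1/(1+B)`
  set B := (1 + K) * exp (2 * (1 + K)⁻¹ / U) - 1 with hB
  have hK1 : 0 < 1 + K := by linarith
  have hpos : 0 < 2 * (1 + K)⁻¹ / U := by positivity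
  have hKB : K < B := by
    have := one_lt_exp_iff.mpr hpos
    nlinarith
  have hgapK : 0 < stationarityGap U K K := by
    simp [stationarityGap, div_self hK1.ne', hK1]
  have hgapB : stationarityGap U K B < 0 := by
    have hlog : U * log ((1 + B) / (1 + K)) = 2 * (1 + K)⁻¹ := by
      rw [hB, add_sub_cancel, mul_div_cancel_left₀ _ hK1.ne', log_exp]
      field_simp
    have hinv : (1 + B)⁻¹ < (1 + K)⁻¹ := inv_strictAnti₀ hK1 (by linarith)
    have := inv_pos.mpr hK1
    simp only [stationarityGap, hlog]
    linarith
  have hcont : ContinuousOn (stationarityGap U K) (Icc K B) := fun x hx =>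
    (hasDerivAt_stationarityGap hK (by linarith [hx.1])).continuousAt.continuousWithinAt
  obtain ⟨Y, hY, hY0⟩ := intermediate_value_Icc' hKB.le hcont ⟨hgapB.le, hgapK.le⟩
  exact ⟨Y, lt_of_le_of_ne hY.1 (by rintro rfl; linarith), hY0⟩

theorem iteratedDeriv_two_throughput (hK : -1 < K) (hY : -1 < Y)
    (hgap : stationarityGap U K Y = 0) :
    iteratedDeriv 2 (throughput U K) Y =
      -exp (-U * Y) * (U * (1 + Y) + 1) / ((1 + Y) ^ 2 * log 2) := by
  have hderiv : deriv (throughput U K) =ᶠ[𝓝 Y]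
      fun Y => exp (-U * Y) / log 2 * stationarityGap U K Y := by
    filter_upwards [Ioi_mem_nhds hY] with Y hY
    rw [(hasDerivAt_throughput hK hY).deriv]
    ring
  have hexp : HasDerivAt (fun Y => exp (-U * Y) / log 2) (exp (-U * Y) * -U / log 2) Y := by
    simpa using (((hasDerivAt_id Y).const_mul (-U)).exp).div_const (log 2)
  rw [iteratedDeriv_succ, iteratedDeriv_one, hderiv.deriv_eq,
    (hexp.mul_of_eq_zero (hasDerivAt_stationarityGap hK hY) hgap).deriv]
  field_simp [show 1 + Y ≠ 0 by linarith]
  ring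

theorem isMaxOn_throughput (hU : 0 < U) (hK : -1 < K) (hY : -1 < Y)
    (hgap : stationarityGap U K Y = 0) :
    IsMaxOn (throughput U K) (Ioi (-1)) Y := by
  have hderiv {x : ℝ} (hx : -1 < x) := hasDerivAt_throughput (U := U) hK hx
  have hgap_anti := stationarityGap_strictAntiOn hU hK
  refine isMaxOn_Ioi_of_deriv (hderiv hY).continuousAt
    (fun x hx => (hderiv hx.1).differentiableAt.differentiableWithinAt)
    (fun x hx => (hderiv (hY.trans hx)).differentiableAt.differentiableWithinAt)
    (fun x hx => ?_) (fun x hx => ?_)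
  · have : 0 < stationarityGap U K x := hgap ▸ hgap_anti hx.1 hY hx.2
    rw [(hderiv hx.1).deriv]
    positivity
  · have : stationarityGap U K x < 0 := hgap ▸ hgap_anti hY (hY.trans hx) hx
    rw [(hderiv (hY.trans hx)).deriv]
    exact div_nonpos_of_nonpos_of_nonneg
      (mul_nonpos_of_nonneg_of_nonpos (exp_pos _).le this.le) (log_nonneg one_le_two)

end

/-- Theorem 2: with `Z(Y) = K/Y` fixed by the SOP constraint (`Y·Z(Y) = K`),
the throughput `Ω(Y) = log₂((1+Y)/(1+YZ(Y)))·exp(−UY)` has a unique stationary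
point `Y* ∈ (K,∞)` satisfying `1/((1+Y)ln 2) = U·log₂((1+Y)/(1+K))`, where the
second derivative equals `−exp(−UY*)(U(1+Y*)+1)/((1+Y*)² ln 2) < 0`, and `Ω` is
maximized on `(K,∞)` at `Y*`. -/
theorem stmt_6 (U K : ℝ) (hU : 0 < U) (hK : 0 < K)
    (Z : ℝ → ℝ) (hZ : ∀ Y > (0:ℝ), Y * Z Y = K) :
    ∃ Ys ∈ Set.Ioi K,
      (1 / ((1 + Ys) * Real.log 2) = U * Real.logb 2 ((1 + Ys) / (1 + K))) ∧
      (∀ Y ∈ Set.Ioi K,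
        1 / ((1 + Y) * Real.log 2) = U * Real.logb 2 ((1 + Y) / (1 + K)) → Y = Ys) ∧
      (iteratedDeriv 2
          (fun Y => Real.logb 2 ((1 + Y) / (1 + Y * Z Y)) * Real.exp (-U * Y)) Ys =
        -Real.exp (-U * Ys) * (U * (1 + Ys) + 1) / ((1 + Ys) ^ 2 * Real.log 2)) ∧
      (-Real.exp (-U * Ys) * (U * (1 + Ys) + 1) / ((1 + Ys) ^ 2 * Real.log 2) < 0) ∧
      (∀ Y ∈ Set.Ioi K,
        Real.logb 2 ((1 + Y) / (1 + Y * Z Y)) * Real.exp (-U * Y) ≤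
          Real.logb 2 ((1 + Ys) / (1 + Ys * Z Ys)) * Real.exp (-U * Ys)) := by
  have hK1 : -1 < K := by linarith
  have hΩ : EqOn (fun Y => logb 2 ((1 + Y) / (1 + Y * Z Y)) * exp (-U * Y)) (throughput U K)
      (Ioi 0) := fun Y hY => by simp only [throughput, hZ Y hY]
  obtain ⟨Ys, hYs, hgap⟩ := exists_stationarityGap_eq_zero hU hK1
  have hYs0 : 0 < Ys := hK.trans hYs
  refine ⟨Ys, hYs, one_div_mul_log_two_eq_iff.mpr hgap, fun Y hY hroot => ?_, ?_, ?_, ?_⟩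
  · exact (stationarityGap_strictAntiOn hU hK1).injOn (hK1.trans hY) (hK1.trans hYs)
      ((one_div_mul_log_two_eq_iff.mp hroot).trans hgap.symm)
  · rw [(eventuallyEq_of_mem (Ioi_mem_nhds hYs0) hΩ).iteratedDeriv_eq 2,
      iteratedDeriv_two_throughput hK1 (hK1.trans hYs) hgap]
  · have : 0 < U * (1 + Ys) + 1 := by positivity
    have : 0 < log 2 := log_pos one_lt_two
    rw [neg_mul, neg_div, neg_neg_iff_pos]
    positivity
  · intro Y hY
    rw [hZ Y (hK.trans hY), hZ Ys hYs0]
    exact isMaxOn_iff.mp (isMaxOn_throughput hU hK1 (hK1.trans hYs) hgap) Y (hK1.trans hY)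
end

section
/- Fix R_S > 0, τ > 0 and define μ_{A2}(R_C, R_S) implicitly via G(μ_{A2}, μ_B/ρ, R_C, R_S) = τ, where G(μ, g, R_C, R_S) = ((2^{R_C−R_S}−1) P_B μ d_AB^{−α} / ((2^{R_C}−1)(σ_B² + ρ P_B g)) + 1)^{−1} · ((2^{R_C−R_S}−1) σ_E² μ d_AB^{−α} / ((2^{R_C}−1)(σ_B² + ρ P_B g)))^{−2/α}. Then the partial derivative of the throughput Ω̃ = R_S exp(−μ_{A2}(R_C, R_S)) with respect to R_C equals R_S μ_{A2} exp(−μ_{A2}) ln 2 · (1/(2^{R_C−R_S}−1) − 1/(2^{R_C}−1)) > 0; hence Ω̃ is strictly increasing in R_C. -/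
/-! The implicit equation involves `μ_{A2}(R_C)` only through
`t(R_C) = (2^{R_C−R_S}−1) μ_{A2}(R_C) d_AB^{−α} / ((2^{R_C}−1)(σ_B² + P_B μ_B))`, and
`t ↦ (P_B t + 1)⁻¹ (σ_E² t)^{−2/α}` is strictly decreasing on `t > 0`, so `t` is constant. Hence
`μ_{A2}(R_C) = c (2^{R_C}−1)/(2^{R_C−R_S}−1)` for a constant `c`, and logarithmic differentiation
of this ratio gives the derivative; it is positive because `2^{R_C−R_S} < 2^{R_C}`. -/

open Real Set Filter Topology

lemma strictAntiOn_inv_add_one_mul_rpow_neg {A B p : ℝ} (hA : 0 ≤ A) (hB : 0 < B) (hp : 0 < p) :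
    StrictAntiOn (fun y : ℝ => (A * y + 1)⁻¹ * (B * y) ^ (-p)) (Ioi 0) := by
  intro y₁ (hy₁ : 0 < y₁) y₂ (hy₂ : 0 < y₂) h
  have hinv : (A * y₂ + 1)⁻¹ ≤ (A * y₁ + 1)⁻¹ := by gcongr
  have hrpow : (B * y₂) ^ (-p) < (B * y₁) ^ (-p) :=
    rpow_lt_rpow_of_neg (by positivity) (by gcongr) (neg_neg_of_pos hp)
  exact mul_lt_mul' hinv hrpow (by positivity) (by positivity)

lemma exists_eq_const_mul_of_injOn {F μ g : ℝ → ℝ} {s : Set ℝ} {k τ : ℝ}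
    (hF : InjOn F (Ioi 0)) (hk : 0 < k) (hμ : ∀ r ∈ s, 0 < μ r) (hg : ∀ r ∈ s, 0 < g r)
    (h : ∀ r ∈ s, F (k * μ r / g r) = τ) : ∃ c, EqOn μ (fun r => c * g r) s := by
  rcases s.eq_empty_or_nonempty with rfl | ⟨r₀, hr₀⟩
  · exact ⟨0, by simp⟩
  refine ⟨μ r₀ / g r₀, fun r hr => ?_⟩
  have hpos : ∀ r ∈ s, k * μ r / g r ∈ Ioi 0 := fun r hr =>
    div_pos (mul_pos hk (hμ r hr)) (hg r hr)
  have heq := hF (hpos r hr) (hpos r₀ hr₀) ((h r hr).trans (h r₀ hr₀).symm)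
  have := (hg r hr).ne'; have := (hg r₀ hr₀).ne'
  field_simp at heq ⊢
  linear_combination heq

lemma hasDerivAt_rpow_sub_one_div_rpow_sub_one {x s r : ℝ} (hx : 0 < x) (h₁ : x ^ r ≠ 1)
    (h₂ : x ^ (r - s) ≠ 1) :
    HasDerivAt (fun r => (x ^ r - 1) / (x ^ (r - s) - 1))
      ((x ^ r - 1) / (x ^ (r - s) - 1) * (1 / (x ^ r - 1) - 1 / (x ^ (r - s) - 1)) * log x) r := by
  have hnum : HasDerivAt (fun r => x ^ r - 1) (x ^ r * log x) r :=
    (hasStrictDerivAt_const_rpow hx r).hasDerivAt.sub_const 1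
  have hden : HasDerivAt (fun r => x ^ (r - s) - 1) (x ^ (r - s) * log x) r := by
    simpa using ((hasStrictDerivAt_const_rpow hx (r - s)).hasDerivAt.comp r
      ((hasDerivAt_id r).sub_const s)).sub_const 1
  refine (hnum.div hden (sub_ne_zero.2 h₂)).congr_deriv ?_
  have := sub_ne_zero.2 h₁; have := sub_ne_zero.2 h₂
  field_simp
  ring

lemma one_div_rpow_sub_one_lt {x s r : ℝ} (hx : 1 < x) (hs : 0 < s) (hr : s < r) :
    1 / (x ^ r - 1) < 1 / (x ^ (r - s) - 1) := by
  have h₁ : 1 < x ^ (r - s) := one_lt_rpow hx (sub_pos.2 hr)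
  have h₂ : x ^ (r - s) < x ^ r := rpow_lt_rpow_of_exponent_lt hx (by linarith)
  gcongr

lemma hasDerivAt_const_mul_exp_neg_of_eqOn {μ : ℝ → ℝ} {x R c s r : ℝ} (hx : 1 < x)
    (hμ : EqOn μ (fun r => c * ((x ^ r - 1) / (x ^ (r - s) - 1))) (Ioi s)) (hs : 0 < s) (hr : s < r) :
    HasDerivAt (fun r => R * exp (-(μ r)))
      (R * μ r * exp (-(μ r)) * (1 / (x ^ (r - s) - 1) - 1 / (x ^ r - 1)) * log x) r := by
  have hq := hasDerivAt_rpow_sub_one_div_rpow_sub_one (s := s) (zero_lt_one.trans hx)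
    (one_lt_rpow hx (hs.trans hr)).ne' (one_lt_rpow hx (sub_pos.2 hr)).ne'
  have hev : (fun r => R * exp (-(μ r))) =ᶠ[𝓝 r]
      fun r => R * exp (-(c * ((x ^ r - 1) / (x ^ (r - s) - 1)))) :=
    eventually_of_mem (Ioi_mem_nhds hr) fun r' hr' => by simp only [hμ hr']
  refine (((hq.const_mul c).neg.exp.const_mul R).congr_of_eventuallyEq hev).congr_deriv ?_
  rw [hμ hr, Pi.neg_apply]
  ring

theorem stmt_17_general (PB ρ σB2 σE2 dAB α μB τ RS : ℝ)
    (hPB : 0 ≤ PB) (hρ0 : 0 < ρ) (hσB : 0 < σB2) (hσE : 0 < σE2)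
    (hd : 0 < dAB) (hα : 2 ≤ α) (hμB : 0 ≤ μB) (hRS : 0 < RS)
    (μA2 : ℝ → ℝ) (hμA2pos : ∀ RC > RS, 0 < μA2 RC)
    (hμA2 : ∀ RC > RS,
      ((((2:ℝ) ^ (RC - RS) - 1) * PB * μA2 RC * dAB ^ (-α)) /
          (((2:ℝ) ^ RC - 1) * (σB2 + ρ * PB * (μB / ρ))) + 1)⁻¹ *
        ((((2:ℝ) ^ (RC - RS) - 1) * σE2 * μA2 RC * dAB ^ (-α)) /
          (((2:ℝ) ^ RC - 1) * (σB2 + ρ * PB * (μB / ρ)))) ^ (-(2 / α)) = τ) :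
    (∀ RC > RS,
      HasDerivAt (fun r : ℝ => RS * Real.exp (-(μA2 r)))
        (RS * μA2 RC * Real.exp (-(μA2 RC)) *
          (1 / ((2:ℝ) ^ (RC - RS) - 1) - 1 / ((2:ℝ) ^ RC - 1)) * Real.log 2) RC ∧
      0 < RS * μA2 RC * Real.exp (-(μA2 RC)) *
          (1 / ((2:ℝ) ^ (RC - RS) - 1) - 1 / ((2:ℝ) ^ RC - 1)) * Real.log 2) ∧
    StrictMonoOn (fun r : ℝ => RS * Real.exp (-(μA2 r))) (Set.Ioi RS) := by
  set S := σB2 + ρ * PB * (μB / ρ)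
  have hS : 0 < S := by positivity
  have hratio : ∀ r ∈ Ioi RS, 0 < ((2:ℝ) ^ r - 1) / (2 ^ (r - RS) - 1) := fun r (hr : RS < r) =>
    div_pos (sub_pos.2 (one_lt_rpow one_lt_two (hRS.trans hr)))
      (sub_pos.2 (one_lt_rpow one_lt_two (sub_pos.2 hr)))
  obtain ⟨c, hc⟩ := exists_eq_const_mul_of_injOn (τ := τ)
    (strictAntiOn_inv_add_one_mul_rpow_neg hPB hσE (by positivity : 0 < 2 / α)).injOn
    (by positivity : 0 < dAB ^ (-α) / S) hμA2pos hratio fun r hr => by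
      convert hμA2 r hr using 4 <;> simp only [div_eq_mul_inv, mul_inv, inv_inv] <;> ring
  have hderiv := fun RC (hRC : RS < RC) =>
    hasDerivAt_const_mul_exp_neg_of_eqOn (R := RS) one_lt_two hc hRS hRC
  have hpos : ∀ RC > RS, 0 < RS * μA2 RC * Real.exp (-(μA2 RC)) *
      (1 / ((2:ℝ) ^ (RC - RS) - 1) - 1 / ((2:ℝ) ^ RC - 1)) * Real.log 2 := fun RC hRC => by
    have := hμA2pos RC hRC
    have := sub_pos.2 (one_div_rpow_sub_one_lt one_lt_two hRS hRC)
    have := log_pos one_lt_two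
    positivity
  refine ⟨fun RC hRC => ⟨hderiv RC hRC, hpos RC hRC⟩, strictMonoOn_of_deriv_pos (convex_Ioi RS)
    (fun r hr => (hderiv r hr).continuousAt.continuousWithinAt) fun r hr => ?_⟩
  rw [interior_Ioi] at hr
  exact (hderiv r hr).deriv ▸ hpos r hr

/-- Appendix B, Case 2: with `μ_{A2}(R_C)` defined implicitly by
`G(μ_{A2}, μ_B/ρ, R_C, R_S) = τ`, the throughput `Ω̃ = R_S exp(−μ_{A2}(R_C))`
has derivative in `R_C` equal to
`R_S μ_{A2} exp(−μ_{A2}) ln 2 (1/(2^{R_C−R_S}−1) − 1/(2^{R_C}−1)) > 0`;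
hence `Ω̃` is strictly increasing in `R_C`. -/
theorem stmt_17 (PB ρ σB2 σE2 dAB α μB τ RS : ℝ)
    (hPB : 0 ≤ PB) (hρ0 : 0 < ρ) (hρ1 : ρ ≤ 1) (hσB : 0 < σB2) (hσE : 0 < σE2)
    (hd : 0 < dAB) (hα : 2 ≤ α) (hμB : 0 ≤ μB) (hτ : 0 < τ) (hRS : 0 < RS)
    (μA2 : ℝ → ℝ) (hμA2pos : ∀ RC > RS, 0 < μA2 RC)
    (hμA2 : ∀ RC > RS,
      ((((2:ℝ) ^ (RC - RS) - 1) * PB * μA2 RC * dAB ^ (-α)) /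
          (((2:ℝ) ^ RC - 1) * (σB2 + ρ * PB * (μB / ρ))) + 1)⁻¹ *
        ((((2:ℝ) ^ (RC - RS) - 1) * σE2 * μA2 RC * dAB ^ (-α)) /
          (((2:ℝ) ^ RC - 1) * (σB2 + ρ * PB * (μB / ρ)))) ^ (-(2 / α)) = τ) :
    (∀ RC > RS,
      HasDerivAt (fun r : ℝ => RS * Real.exp (-(μA2 r)))
        (RS * μA2 RC * Real.exp (-(μA2 RC)) *
          (1 / ((2:ℝ) ^ (RC - RS) - 1) - 1 / ((2:ℝ) ^ RC - 1)) * Real.log 2) RC ∧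
      0 < RS * μA2 RC * Real.exp (-(μA2 RC)) *
          (1 / ((2:ℝ) ^ (RC - RS) - 1) - 1 / ((2:ℝ) ^ RC - 1)) * Real.log 2) ∧
    StrictMonoOn (fun r : ℝ => RS * Real.exp (-(μA2 r))) (Set.Ioi RS) :=
  stmt_17_general PB ρ σB2 σE2 dAB α μB τ RS hPB hρ0 hσB hσE hd hα hμB hRS μA2 hμA2pos hμA2
end

section
/- Let μ_{A1}(R_C) = (2^{R_C}−1)(σ_B² + P_B μ_B) d_AB^α / P_{Amax} and let μ_{A2}(R_C, R_S) be the unique value μ with G(μ, μ_B/ρ, R_C, R_S) = τ (G as in the SOP constraint, strictly decreasing in μ). If at the optimum of maximizing R_S exp(−max{μ_{A1}, μ_{A2}}) over (R_C, R_S) with 0 < R_S < R_C, then necessarily μ_{A1}(R_C) = μ_{A2}(R_C, R_S); i.e., the two threshold constraints are active simultaneously: in the region μ_{A1} ≥ μ_{A2} the objective strictly decreases in R_C so R_C is pushed down until equality, and in the region μ_{A1} ≤ μ_{A2} the objective strictly increases in R_C so R_C is pushed up until equality. -/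
/-!
The SOP function `G(μ, R_C, R_S)` depends on `μ` and the rates only through `u(R_C, R_S) * μ`,
where `u = (2^{R_C - R_S} - 1) / (2^{R_C} - 1)` is `rateRatio`: `G = sopProfile p e c (u * μ)`.
As `sopProfile` is strictly decreasing, the defining equation `G = τ` pins `u * μ_{A2}` to one
constant `k`, so `μ_{A2} = k / u`. Now `u` increases with `R_C`, while `μ_{A1}` is continuous in
`R_C` and independent of `R_S`. If `μ_{A1} < μ_{A2}` at the optimum, raising `R_C` slightly lowers
the maximum of the two thresholds; if `μ_{A1} > μ_{A2}`, raising `R_S` slightly keeps the maximum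
equal to `μ_{A1}`. Either way the objective `R_S exp(-max(μ_{A1}, μ_{A2}))` strictly increases.
-/

open Real Set Filter Topology

lemma div_sub_one_div_sub_one_lt {a t t' : ℝ} (ha : 1 < a) (ht : 1 < t) (htt' : t < t') :
    (t / a - 1) / (t - 1) < (t' / a - 1) / (t' - 1) := by
  rw [div_lt_div_iff₀ (by linarith) (by linarith)]
  have ha_inv : a⁻¹ < 1 := inv_lt_one_of_one_lt₀ ha
  -- the difference of the two sides is `(t' - t) * (1 - a⁻¹)`
  simp only [div_eq_mul_inv]
  nlinarith [mul_pos (sub_pos.2 htt') (sub_pos.2 ha_inv)]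

noncomputable def rateRatio (RC RS : ℝ) : ℝ :=
  ((2 : ℝ) ^ (RC - RS) - 1) / ((2 : ℝ) ^ RC - 1)

lemma rateRatio_pos {RC RS : ℝ} (hRS : 0 < RS) (hRC : RS < RC) : 0 < rateRatio RC RS :=
  div_pos (sub_pos.2 (one_lt_rpow one_lt_two (sub_pos.2 hRC)))
    (sub_pos.2 (one_lt_rpow one_lt_two (hRS.trans hRC)))

lemma rateRatio_lt_rateRatio {RC RC' RS : ℝ} (hRS : 0 < RS) (hRC : RS < RC) (hRC' : RC < RC') :
    rateRatio RC RS < rateRatio RC' RS := by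
  simp only [rateRatio, rpow_sub two_pos]
  exact div_sub_one_div_sub_one_lt (one_lt_rpow one_lt_two hRS)
    (one_lt_rpow one_lt_two (hRS.trans hRC)) (rpow_lt_rpow_of_exponent_lt one_lt_two hRC')

lemma continuous_rateRatio (RC : ℝ) : Continuous (rateRatio RC) := by
  unfold rateRatio
  fun_prop (disch := norm_num)

noncomputable def sopProfile (p e c x : ℝ) : ℝ := (p * x + 1)⁻¹ * (e * x) ^ c

lemma sop_eq_sopProfile (RC RS X Y Z D c μ : ℝ) :
    ((((2 : ℝ) ^ (RC - RS) - 1) * X * μ * Y) / (((2 : ℝ) ^ RC - 1) * D) + 1)⁻¹ *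
        ((((2 : ℝ) ^ (RC - RS) - 1) * Z * μ * Y) / (((2 : ℝ) ^ RC - 1) * D)) ^ c =
      sopProfile (X * Y / D) (Z * Y / D) c (rateRatio RC RS * μ) := by
  simp only [sopProfile, rateRatio, div_eq_mul_inv, mul_inv]
  ring_nf

lemma sopProfile_strictAntiOn {p e c : ℝ} (hp : 0 ≤ p) (he : 0 < e) (hc : c < 0) :
    StrictAntiOn (sopProfile p e c) (Ioi 0) := by
  intro x (hx : 0 < x) y (hy : 0 < y) hxy
  have hex : 0 < e * x := mul_pos he hx
  calc (p * y + 1)⁻¹ * (e * y) ^ c < (p * y + 1)⁻¹ * (e * x) ^ c :=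
        mul_lt_mul_of_pos_left (rpow_lt_rpow_of_neg hex (by gcongr) hc) (by positivity)
    _ ≤ (p * x + 1)⁻¹ * (e * x) ^ c := by gcongr

lemma eq_of_forall_mul_exp_neg_max_le {A : ℝ → ℝ} {B : ℝ → ℝ → ℝ} {RCo RSo : ℝ}
    (hRSo : 0 < RSo) (hRCo : RSo < RCo) (hA : ContinuousAt A RCo)
    (hB_anti : ∀ RC, RCo < RC → B RC RSo < B RCo RSo) (hB_cont : ContinuousAt (B RCo) RSo)
    (hopt : ∀ RC RS, 0 < RS → RS < RC →
      RS * exp (-max (A RC) (B RC RS)) ≤ RSo * exp (-max (A RCo) (B RCo RSo))) :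
    A RCo = B RCo RSo := by
  rcases lt_trichotomy (A RCo) (B RCo RSo) with hlt | heq | hgt
  · obtain ⟨RC, hA_lt, hRC⟩ : ∃ RC, A RC < B RCo RSo ∧ RCo < RC :=
      ((hA.eventually (gt_mem_nhds hlt)).filter_mono nhdsWithin_le_nhds).and
        self_mem_nhdsWithin |>.exists (f := 𝓝[>] RCo)
    have hmax : max (A RC) (B RC RSo) < B RCo RSo := max_lt hA_lt (hB_anti RC hRC)
    have hle := hopt RC RSo hRSo (hRCo.trans hRC)
    rw [max_eq_right hlt.le] at hle
    have hgain : RSo * exp (-B RCo RSo) < RSo * exp (-max (A RC) (B RC RSo)) := by gcongr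
    linarith
  · exact heq
  · obtain ⟨RS, ⟨hB_lt, hRS_lt⟩, hRS⟩ :
        ∃ RS, (B RCo RS < A RCo ∧ RS < RCo) ∧ RSo < RS :=
      (((hB_cont.eventually (gt_mem_nhds hgt)).and (gt_mem_nhds hRCo)).filter_mono
        nhdsWithin_le_nhds).and self_mem_nhdsWithin |>.exists (f := 𝓝[>] RSo)
    have hle := hopt RCo RS (hRSo.trans hRS) hRS_lt
    rw [max_eq_left hgt.le, max_eq_left hB_lt.le] at hle
    have hgain : RSo * exp (-A RCo) < RS * exp (-A RCo) := by gcongr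
    linarith

theorem stmt_18_general (PB μB ρ σB2 σE2 dAB α PAmax τ : ℝ)
    (hPB : 0 ≤ PB) (hμB : 0 ≤ μB) (hρ0 : 0 < ρ)
    (hσB : 0 < σB2) (hσE : 0 < σE2) (hd : 0 < dAB) (hα : 2 ≤ α)
    (μA2 : ℝ → ℝ → ℝ) (hμA2pos : ∀ RC RS, 0 < RS → RS < RC → 0 < μA2 RC RS)
    (hμA2 : ∀ RC RS, 0 < RS → RS < RC →
      ((((2:ℝ) ^ (RC - RS) - 1) * PB * μA2 RC RS * dAB ^ (-α)) /
          (((2:ℝ) ^ RC - 1) * (σB2 + ρ * PB * (μB / ρ))) + 1)⁻¹ *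
        ((((2:ℝ) ^ (RC - RS) - 1) * σE2 * μA2 RC RS * dAB ^ (-α)) /
          (((2:ℝ) ^ RC - 1) * (σB2 + ρ * PB * (μB / ρ)))) ^ (-(2 / α)) = τ)
    (RCo RSo : ℝ) (hRSo : 0 < RSo) (hRCo : RSo < RCo)
    (hopt : ∀ RC RS, 0 < RS → RS < RC →
      RS * Real.exp (-(max (((2:ℝ) ^ RC - 1) * (σB2 + PB * μB) * dAB ^ α / PAmax)
            (μA2 RC RS))) ≤
        RSo * Real.exp (-(max (((2:ℝ) ^ RCo - 1) * (σB2 + PB * μB) * dAB ^ α / PAmax)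
            (μA2 RCo RSo)))) :
    ((2:ℝ) ^ RCo - 1) * (σB2 + PB * μB) * dAB ^ α / PAmax = μA2 RCo RSo := by
  simp only [sop_eq_sopProfile] at hμA2
  set g := sopProfile (PB * dAB ^ (-α) / (σB2 + ρ * PB * (μB / ρ)))
    (σE2 * dAB ^ (-α) / (σB2 + ρ * PB * (μB / ρ))) (-(2 / α))
  set k := rateRatio RCo RSo * μA2 RCo RSo
  have hg_anti : StrictAntiOn g (Ioi 0) :=
    sopProfile_strictAntiOn (by positivity) (by positivity)
      (neg_lt_zero.2 (by positivity))
  have hk : 0 < k := mul_pos (rateRatio_pos hRSo hRCo) (hμA2pos RCo RSo hRSo hRCo)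
  have hμA2_eq : ∀ RC RS, 0 < RS → RS < RC → μA2 RC RS = k / rateRatio RC RS := by
    intro RC RS hRS hRC
    have hu := rateRatio_pos hRS hRC
    rw [eq_div_iff hu.ne', mul_comm]
    refine hg_anti.injOn (mul_pos hu (hμA2pos RC RS hRS hRC)) hk ?_
    rw [hμA2 RC RS hRS hRC, hμA2 RCo RSo hRSo hRCo]
  refine eq_of_forall_mul_exp_neg_max_le hRSo hRCo (by fun_prop (disch := norm_num))
    (fun RC hRC => ?_) ?_ hopt
  · rw [hμA2_eq RC RSo hRSo (hRCo.trans hRC), hμA2_eq RCo RSo hRSo hRCo]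
    exact div_lt_div_of_pos_left hk (rateRatio_pos hRSo hRCo)
      (rateRatio_lt_rateRatio hRSo hRCo hRC)
  · refine ((continuousAt_const (y := k)).div (continuous_rateRatio RCo).continuousAt
      (rateRatio_pos hRSo hRCo).ne').congr ?_
    filter_upwards [Ioo_mem_nhds hRSo hRCo] with RS hRS
    exact (hμA2_eq RCo RS hRS.1 hRS.2).symm

/-- Proposition 1: at an optimum of maximizing `R_S exp(−max{μ_{A1}, μ_{A2}})`
over `0 < R_S < R_C`, the power-budget threshold
`μ_{A1}(R_C) = (2^{R_C}−1)(σ_B² + P_Bμ_B)d_{AB}^α/P_{Amax}` and the SOP threshold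
`μ_{A2}(R_C, R_S)` (the unique `μ` with `G(μ, μ_B/ρ, R_C, R_S) = τ`, `G` strictly
decreasing in `μ`) coincide: `μ_{A1}(R_C*) = μ_{A2}(R_C*, R_S*)`. -/
theorem stmt_18 (PB μB ρ σB2 σE2 dAB α PAmax τ : ℝ)
    (hPB : 0 ≤ PB) (hμB : 0 ≤ μB) (hρ0 : 0 < ρ) (hρ1 : ρ ≤ 1)
    (hσB : 0 < σB2) (hσE : 0 < σE2) (hd : 0 < dAB) (hα : 2 ≤ α)
    (hPA : 0 < PAmax) (hτ : 0 < τ)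
    (μA2 : ℝ → ℝ → ℝ) (hμA2pos : ∀ RC RS, 0 < RS → RS < RC → 0 < μA2 RC RS)
    (hμA2 : ∀ RC RS, 0 < RS → RS < RC →
      ((((2:ℝ) ^ (RC - RS) - 1) * PB * μA2 RC RS * dAB ^ (-α)) /
          (((2:ℝ) ^ RC - 1) * (σB2 + ρ * PB * (μB / ρ))) + 1)⁻¹ *
        ((((2:ℝ) ^ (RC - RS) - 1) * σE2 * μA2 RC RS * dAB ^ (-α)) /
          (((2:ℝ) ^ RC - 1) * (σB2 + ρ * PB * (μB / ρ)))) ^ (-(2 / α)) = τ)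
    (hGanti : ∀ RC RS, 0 < RS → RS < RC →
      StrictAntiOn
        (fun μ : ℝ =>
          ((((2:ℝ) ^ (RC - RS) - 1) * PB * μ * dAB ^ (-α)) /
              (((2:ℝ) ^ RC - 1) * (σB2 + ρ * PB * (μB / ρ))) + 1)⁻¹ *
            ((((2:ℝ) ^ (RC - RS) - 1) * σE2 * μ * dAB ^ (-α)) /
              (((2:ℝ) ^ RC - 1) * (σB2 + ρ * PB * (μB / ρ)))) ^ (-(2 / α)))
        (Set.Ioi 0))
    (RCo RSo : ℝ) (hRSo : 0 < RSo) (hRCo : RSo < RCo)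
    (hopt : ∀ RC RS, 0 < RS → RS < RC →
      RS * Real.exp (-(max (((2:ℝ) ^ RC - 1) * (σB2 + PB * μB) * dAB ^ α / PAmax)
            (μA2 RC RS))) ≤
        RSo * Real.exp (-(max (((2:ℝ) ^ RCo - 1) * (σB2 + PB * μB) * dAB ^ α / PAmax)
            (μA2 RCo RSo)))) :
    ((2:ℝ) ^ RCo - 1) * (σB2 + PB * μB) * dAB ^ α / PAmax = μA2 RCo RSo :=
  stmt_18_general PB μB ρ σB2 σE2 dAB α PAmax τ hPB hμB hρ0 hσB hσE hd hα μA2 hμA2pos hμA2 RCo RSo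
    hRSo hRCo hopt
end
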